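/- arXiv:2506.09871 — 6 statements merged into one kernel-verified Lean document; each statement's English description precedes it below -/
import Mathlib

section
/- Let 𝒴 ⊂ ℝ be a finite set, let 𝒜, 𝒰, 𝒱 be finite types, let p be a strictly positive probability mass function on 𝒴 × 𝒜 × 𝒰 × 𝒱, and fix a ∈ 𝒜. Then the influence function ψ_a has mean zero under p: ∑_{(y,a′,u,v)} p(y,a′,u,v) · ψ_a(y,a′,u,v) = 0. -/
/-!
The residual term of `ψ_a` has conditional mean zero given `(a, u, v)`, since `m(u,v)` is the
`p(· | a, u, v)`-mean of `y`; the two partial regressions `∑_{v'} p(v') m(u,v')` and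
`∑_{u'} p(u') m(u',v)` both average to `T_a(p)` against the marginals `p(u)` and `p(v)`.
Hence the four terms of `E_p[ψ_a]` sum to `0 + T_a(p) + T_a(p) - 2 T_a(p)`.
-/

open Finset

noncomputable section

variable {Y : Finset ℝ} {A U V : Type}
variable [Fintype A] [Fintype U] [Fintype V] [DecidableEq A]

/-- Marginal of `p` on the mediator part `U`. -/
def pU (p : Y × A × U × V → ℝ) (u : U) : ℝ :=
  ∑ y : Y, ∑ a : A, ∑ v : V, p (y, a, u, v)

/-- Marginal of `p` on the non-mediator part `V`. -/
def pV (p : Y × A × U × V → ℝ) (v : V) : ℝ :=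
  ∑ y : Y, ∑ a : A, ∑ u : U, p (y, a, u, v)

/-- Joint marginal of `p` on `(A, U, V)`. -/
def pAUV (p : Y × A × U × V → ℝ) (a : A) (u : U) (v : V) : ℝ :=
  ∑ y : Y, p (y, a, u, v)

/-- Outcome regression `m(u,v) = ∑_y y · p(y | a, u, v)`. -/
def mReg (p : Y × A × U × V → ℝ) (a : A) (u : U) (v : V) : ℝ :=
  ∑ y : Y, (y : ℝ) * (p (y, a, u, v) / pAUV p a u v)

/-- Target parameter `T_a(p) = ∑_u p(u) ∑_v p(v) m(u,v)`. -/
def Ta (p : Y × A × U × V → ℝ) (a : A) : ℝ :=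
  ∑ u : U, pU p u * ∑ v : V, pV p v * mReg p a u v

/-- Influence function of the adjusted functional for the WCDE. -/
def psi (p : Y × A × U × V → ℝ) (a : A) : Y × A × U × V → ℝ :=
  fun (y, a', u, v) =>
    (if a' = a then (1 : ℝ) else 0) * (pU p u * pV p v / pAUV p a u v) *
        ((y : ℝ) - mReg p a u v)
      + (∑ v' : V, pV p v' * mReg p a u v')
      + (∑ u' : U, pU p u' * mReg p a u' v)
      - 2 * Ta p a

section FourfoldSums

variable {R : Type*} [CommSemiring R] {α β γ δ : Type*} [Fintype α] [Fintype β] [Fintype γ]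
  [Fintype δ]

theorem Fintype.sum_mul_comp_snd_snd_fst (p : α × β × γ × δ → R) (f : γ → R) :
    ∑ o, p o * f o.2.2.1 = ∑ c, (∑ x, ∑ b, ∑ d, p (x, b, c, d)) * f c := by
  simp only [Fintype.sum_prod_type, sum_mul]
  simp only [sum_comm (t := (univ : Finset γ))]

theorem Fintype.sum_mul_comp_snd_snd_snd (p : α × β × γ × δ → R) (f : δ → R) :
    ∑ o, p o * f o.2.2.2 = ∑ d, (∑ x, ∑ b, ∑ c, p (x, b, c, d)) * f d := by
  simp only [Fintype.sum_prod_type, sum_mul]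
  simp only [sum_comm (t := (univ : Finset δ))]

theorem Fintype.sum_mul_ite_snd_fst_eq [DecidableEq β] (p : α × β × γ × δ → R) (b : β)
    (g : α → γ → δ → R) :
    ∑ o, p o * (if o.2.1 = b then g o.1 o.2.2.1 o.2.2.2 else 0)
      = ∑ c, ∑ d, ∑ x, p (x, b, c, d) * g x c d := by
  simp only [Fintype.sum_prod_type, mul_ite, mul_zero, sum_ite_irrel, sum_const_zero,
    sum_ite_eq']
  simp only [sum_comm (t := (univ : Finset α))]

end FourfoldSums

/-- If `W = 0` the prefactor `c / W` is `0` by convention. -/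
theorem div_mul_sum_mul_sub_weightedAvg_eq_zero {K ι : Type*} [Field K] (s : Finset ι)
    (w f : ι → K) (c : K) :
    c / (∑ i ∈ s, w i) * ∑ i ∈ s, w i * (f i - ∑ j ∈ s, f j * (w j / ∑ k ∈ s, w k)) = 0 := by
  rcases eq_or_ne (∑ i ∈ s, w i) 0 with hW | hW
  · rw [hW, div_zero, zero_mul]
  · have hcentered : ∑ i ∈ s, w i * (f i - ∑ j ∈ s, f j * (w j / ∑ k ∈ s, w k)) = 0 := by
      simp only [mul_sub, sum_sub_distrib, ← sum_mul, mul_div_assoc']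
      rw [← sum_div, mul_div_cancel₀ _ hW]
      simp only [mul_comm, sub_self]
    rw [hcentered, mul_zero]

theorem psi_apply (p : Y × A × U × V → ℝ) (a : A) (o : Y × A × U × V) :
    psi p a o = (if o.2.1 = a then
          pU p o.2.2.1 * pV p o.2.2.2 / pAUV p a o.2.2.1 o.2.2.2
            * ((o.1 : ℝ) - mReg p a o.2.2.1 o.2.2.2) else 0)
      + (∑ v' : V, pV p v' * mReg p a o.2.2.1 v')
      + (∑ u' : U, pU p u' * mReg p a u' o.2.2.2)
      - 2 * Ta p a := by
  split_ifs <;> simp [psi, *]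

theorem sum_mul_residual_eq_zero (p : Y × A × U × V → ℝ) (a : A) :
    ∑ o : Y × A × U × V, p o * (if o.2.1 = a then
        pU p o.2.2.1 * pV p o.2.2.2 / pAUV p a o.2.2.1 o.2.2.2
          * ((o.1 : ℝ) - mReg p a o.2.2.1 o.2.2.2) else 0) = 0 := by
  rw [Fintype.sum_mul_ite_snd_fst_eq p a fun y u v =>
    pU p u * pV p v / pAUV p a u v * ((y : ℝ) - mReg p a u v)]
  refine sum_eq_zero fun u _ => sum_eq_zero fun v _ => ?_
  simp only [mul_left_comm (p _), ← mul_sum]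
  exact div_mul_sum_mul_sub_weightedAvg_eq_zero _ _ _ _

theorem psi_mean_zero_general (p : Y × A × U × V → ℝ)
    (hsum : ∑ o, p o = 1) (a : A) :
    ∑ o : Y × A × U × V, p o * psi p a o = 0 := by
  have hu : ∑ o : Y × A × U × V, p o * ∑ v' : V, pV p v' * mReg p a o.2.2.1 v' = Ta p a :=
    Fintype.sum_mul_comp_snd_snd_fst p fun u => ∑ v' : V, pV p v' * mReg p a u v'
  have hv : ∑ o : Y × A × U × V, p o * ∑ u' : U, pU p u' * mReg p a u' o.2.2.2 = Ta p a := by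
    rw [Fintype.sum_mul_comp_snd_snd_snd p fun v => ∑ u' : U, pU p u' * mReg p a u' v, Ta]
    simp only [mul_sum]
    rw [sum_comm]
    exact sum_congr rfl fun _ _ => sum_congr rfl fun _ _ => mul_left_comm _ _ _
  simp only [psi_apply, mul_add, mul_sub _ _ (2 * Ta p a), sum_add_distrib, sum_sub_distrib]
  rw [sum_mul_residual_eq_zero, hu, hv, ← sum_mul, hsum]
  ring

/-- The influence function of the WCDE functional has mean zero. -/
theorem psi_mean_zero (p : Y × A × U × V → ℝ)
    (hpos : ∀ o, 0 < p o) (hsum : ∑ o, p o = 1) (a : A) :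
    ∑ o : Y × A × U × V, p o * psi p a o = 0 :=
  psi_mean_zero_general p hsum a

end
end

section
/- Let 𝒳, 𝒲, ℛ be finite types, let p be a strictly positive probability mass function on 𝒳 × 𝒲 × ℛ, let S : 𝒳 × 𝒲 × ℛ → ℝ satisfy ∑ p·S = 0, and set p_t := p·(1 + t·S). Then for each (x,w), the map t ↦ p_t(w | x) := p_t(x,w)/p_t(x) (defined for t near 0) is differentiable at t = 0 with derivative (E_p[S | X=x, W=w] − E_p[S | X=x]) · p(w | x), where p_t(x,w) and p_t(x) denote the indicated marginals of p_t and E_p[S | ·] denotes conditional expectation under p. -/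
/-!
Both marginals of `p_t = p·(1 + t·S)` are affine in `t`, with slopes the corresponding marginals
of `p·S`. Hence `p_t(w | x)` is a quotient `(a + t b) / (c + t d)` of affine functions, whose
logarithmic derivative at `0` is `b / a - d / c = E_p[S | X=x, W=w] - E_p[S | X=x]`.
-/

open Finset

noncomputable section

variable {X W R : Type}
variable [Fintype X] [Fintype W] [Fintype R]

/-- Marginal of a function `q` on `(X, W)`. -/
def pXW (q : X × W × R → ℝ) (x : X) (w : W) : ℝ :=
  ∑ r : R, q (x, w, r)

/-- Marginal of a function `q` on `X`. -/
def pX (q : X × W × R → ℝ) (x : X) : ℝ :=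
  ∑ w : W, ∑ r : R, q (x, w, r)

/-- Conditional expectation `E_p[S | X = x, W = w]`. -/
def condExpXW (p S : X × W × R → ℝ) (x : X) (w : W) : ℝ :=
  ∑ r : R, S (x, w, r) * (p (x, w, r) / pXW p x w)

/-- Conditional expectation `E_p[S | X = x]`. -/
def condExpX (p S : X × W × R → ℝ) (x : X) : ℝ :=
  ∑ w : W, ∑ r : R, S (x, w, r) * (p (x, w, r) / pX p x)

omit [Fintype X] [Fintype W] in
theorem pXW_mul_one_add_mul (p S : X × W × R → ℝ) (t : ℝ) (x : X) (w : W) :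
    pXW (fun o => p o * (1 + t * S o)) x w = pXW p x w + t * pXW (fun o => p o * S o) x w := by
  simp only [pXW, mul_sum, ← sum_add_distrib]
  exact sum_congr rfl fun r _ => by ring

omit [Fintype X] in
theorem pX_eq_sum_pXW (q : X × W × R → ℝ) (x : X) : pX q x = ∑ w, pXW q x w := rfl

omit [Fintype X] in
theorem pX_mul_one_add_mul (p S : X × W × R → ℝ) (t : ℝ) (x : X) :
    pX (fun o => p o * (1 + t * S o)) x = pX p x + t * pX (fun o => p o * S o) x := by
  simp only [pX_eq_sum_pXW, pXW_mul_one_add_mul, sum_add_distrib, mul_sum]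

omit [Fintype X] [Fintype W] in
theorem condExpXW_eq_div (p S : X × W × R → ℝ) (x : X) (w : W) :
    condExpXW p S x w = pXW (fun o => p o * S o) x w / pXW p x w := by
  simp only [condExpXW, pXW, sum_div]
  exact sum_congr rfl fun r _ => by ring

omit [Fintype X] in
theorem condExpX_eq_div (p S : X × W × R → ℝ) (x : X) :
    condExpX p S x = pX (fun o => p o * S o) x / pX p x := by
  simp only [condExpX, pX, sum_div]
  exact sum_congr rfl fun w _ => sum_congr rfl fun r _ => by ring

omit [Fintype X] [Fintype W] in
theorem pXW_pos [Nonempty R] {p : X × W × R → ℝ} (hp : ∀ o, 0 < p o) (x : X) (w : W) :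
    0 < pXW p x w :=
  sum_pos (fun _ _ => hp _) univ_nonempty

omit [Fintype X] in
theorem pX_pos [Nonempty W] [Nonempty R] {p : X × W × R → ℝ} (hp : ∀ o, 0 < p o) (x : X) :
    0 < pX p x :=
  sum_pos (fun w _ => pXW_pos hp x w) univ_nonempty

theorem hasDerivAt_add_mul_div_add_mul {a b c d : ℝ} (ha : a ≠ 0) (hc : c ≠ 0) :
    HasDerivAt (fun t => (a + t * b) / (c + t * d)) ((b / a - d / c) * (a / c)) 0 := by
  have hD : c + 0 * d ≠ 0 := by simpa using hc
  refine (((hasDerivAt_mul_const b).const_add a).div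
    ((hasDerivAt_mul_const d).const_add c) hD).congr_deriv ?_
  field_simp
  ring

theorem hasDerivAt_cond_density_general (p : X × W × R → ℝ)
    (hpos : ∀ o, 0 < p o) (hsum : ∑ o, p o = 1)
    (S : X × W × R → ℝ)
    (x : X) (w : W) :
    HasDerivAt
      (fun t : ℝ =>
        pXW (fun o => p o * (1 + t * S o)) x w /
          pX (fun o => p o * (1 + t * S o)) x)
      ((condExpXW p S x w - condExpX p S x) * (pXW p x w / pX p x)) 0 := by
  have : Nonempty W := ⟨w⟩
  have : Nonempty R :=
    (univ_nonempty_iff.mp (nonempty_of_sum_ne_zero (hsum ▸ one_ne_zero))).map (·.2.2)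
  simp only [pXW_mul_one_add_mul, pX_mul_one_add_mul, condExpXW_eq_div, condExpX_eq_div]
  exact hasDerivAt_add_mul_div_add_mul (pXW_pos hpos x w).ne' (pX_pos hpos x).ne'

/-- Discrete form of Levy's lemma: along the score-perturbed submodel
`p_t = p·(1 + t·S)`, the conditional density `p_t(w | x)` is
differentiable at `t = 0` with derivative
`(E_p[S | X=x, W=w] − E_p[S | X=x]) · p(w | x)`. -/
theorem hasDerivAt_cond_density (p : X × W × R → ℝ)
    (hpos : ∀ o, 0 < p o) (hsum : ∑ o, p o = 1)
    (S : X × W × R → ℝ) (hS : ∑ o, p o * S o = 0)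
    (x : X) (w : W) :
    HasDerivAt
      (fun t : ℝ =>
        pXW (fun o => p o * (1 + t * S o)) x w /
          pX (fun o => p o * (1 + t * S o)) x)
      ((condExpXW p S x w - condExpX p S x) * (pXW p x w / pX p x)) 0 :=
  hasDerivAt_cond_density_general p hpos hsum S x w

end
end

section
/- Let 𝒴 ⊂ ℝ be a finite set, let 𝒜, 𝒲, 𝒵₁, 𝒞 be finite types, let p be a strictly positive probability mass function on 𝒴 × 𝒜 × 𝒲 × 𝒵₁ × 𝒞, and fix a ∈ 𝒜. If W ⊥ (A, C) | Z₁ under p, then ∑_{z₁} p(z₁) ∑_c p(c) E[Y | A=a, Z₁=z₁, C=c] = ∑_{(w,z₁)} p(w,z₁) ∑_c p(c) E[Y | A=a, W=w, Z₁=z₁, C=c], where E[Y | ·] := ∑_y y · p(y | ·). -/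
/-! Conditional independence `W ⊥ (A, C) | Z₁` says exactly that the ratio
`p(w, z₁) / p(a, w, z₁, c) = p(z₁) / p(a, z₁, c)` does not depend on `w`. So, for each `z₁`
and `c`, weighting the regression on `(a, w, z₁, c)` by `p(w, z₁)` and summing over `w` gives
`p(z₁)` times the regression on `(a, z₁, c)`; summing against `p(c)` gives the theorem. -/

open Finset

noncomputable section

variable {Y : Finset ℝ} {A W Z₁ C : Type}
variable [Fintype A] [Fintype W] [Fintype Z₁] [Fintype C]

/-- Marginal `p(z₁)`. -/
def pZ1 (p : Y × A × W × Z₁ × C → ℝ) (z₁ : Z₁) : ℝ :=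
  ∑ y : Y, ∑ a : A, ∑ w : W, ∑ c : C, p (y, a, w, z₁, c)

/-- Marginal `p(c)`. -/
def pC (p : Y × A × W × Z₁ × C → ℝ) (c : C) : ℝ :=
  ∑ y : Y, ∑ a : A, ∑ w : W, ∑ z₁ : Z₁, p (y, a, w, z₁, c)

/-- Marginal `p(w, z₁)`. -/
def pWZ1 (p : Y × A × W × Z₁ × C → ℝ) (w : W) (z₁ : Z₁) : ℝ :=
  ∑ y : Y, ∑ a : A, ∑ c : C, p (y, a, w, z₁, c)

/-- Marginal `p(a, z₁, c)`. -/
def pAZ1C (p : Y × A × W × Z₁ × C → ℝ) (a : A) (z₁ : Z₁) (c : C) : ℝ :=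
  ∑ y : Y, ∑ w : W, p (y, a, w, z₁, c)

/-- Marginal `p(a, w, z₁, c)`. -/
def pAWZ1C (p : Y × A × W × Z₁ × C → ℝ) (a : A) (w : W) (z₁ : Z₁) (c : C) : ℝ :=
  ∑ y : Y, p (y, a, w, z₁, c)

/-- Outcome regression `E[Y | A = a, Z₁ = z₁, C = c]`. -/
def EY (p : Y × A × W × Z₁ × C → ℝ) (a : A) (z₁ : Z₁) (c : C) : ℝ :=
  ∑ y : Y, (y : ℝ) * ((∑ w : W, p (y, a, w, z₁, c)) / pAZ1C p a z₁ c)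

/-- Outcome regression `E[Y | A = a, W = w, Z₁ = z₁, C = c]`. -/
def EYW (p : Y × A × W × Z₁ × C → ℝ) (a : A) (w : W) (z₁ : Z₁) (c : C) : ℝ :=
  ∑ y : Y, (y : ℝ) * (p (y, a, w, z₁, c) / pAWZ1C p a w z₁ c)

/-- Conditional independence `W ⊥ (A, C) | Z₁` under `p`:
`p(w, (a, c) | z₁) = p(w | z₁) · p((a, c) | z₁)`. -/
def CI_W_AC_Z1 (p : Y × A × W × Z₁ × C → ℝ) : Prop :=
  ∀ (w : W) (a : A) (c : C) (z₁ : Z₁),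
    pAWZ1C p a w z₁ c / pZ1 p z₁ =
      (pWZ1 p w z₁ / pZ1 p z₁) * (pAZ1C p a z₁ c / pZ1 p z₁)

end

section

variable {Y : Finset ℝ} {A W Z₁ C : Type} {p : Y × A × W × Z₁ × C → ℝ}

theorem pAWZ1C_pos [Nonempty Y] (hpos : ∀ o, 0 < p o) (a : A) (w : W) (z₁ : Z₁) (c : C) :
    0 < pAWZ1C p a w z₁ c :=
  sum_pos (fun _ _ => hpos _) univ_nonempty

theorem pAZ1C_pos [Fintype W] [Nonempty Y] [Nonempty W] (hpos : ∀ o, 0 < p o)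
    (a : A) (z₁ : Z₁) (c : C) :
    0 < pAZ1C p a z₁ c :=
  sum_pos (fun _ _ => sum_pos (fun _ _ => hpos _) univ_nonempty) univ_nonempty

theorem pZ1_pos [Fintype A] [Fintype W] [Fintype C] [Nonempty Y] [Nonempty A] [Nonempty W]
    [Nonempty C] (hpos : ∀ o, 0 < p o) (z₁ : Z₁) : 0 < pZ1 p z₁ :=
  sum_pos (fun _ _ => sum_pos (fun _ _ => sum_pos (fun _ _ => sum_pos
    (fun _ _ => hpos _) univ_nonempty) univ_nonempty) univ_nonempty) univ_nonempty

theorem EY_eq_sum_div [Fintype W] (a : A) (z₁ : Z₁) (c : C) :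
    EY p a z₁ c = (∑ y : Y, (y : ℝ) * ∑ w : W, p (y, a, w, z₁, c)) / pAZ1C p a z₁ c := by
  rw [EY, sum_div]
  simp only [mul_div_assoc]

theorem EYW_eq_sum_div (a : A) (w : W) (z₁ : Z₁) (c : C) :
    EYW p a w z₁ c = (∑ y : Y, (y : ℝ) * p (y, a, w, z₁, c)) / pAWZ1C p a w z₁ c := by
  rw [EYW, sum_div]
  simp only [mul_div_assoc]

theorem CI_W_AC_Z1.pAWZ1C_mul_pZ1 [Fintype A] [Fintype W] [Fintype C] (hCI : CI_W_AC_Z1 p)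
    (a : A) (w : W) (z₁ : Z₁) (c : C) (hz : pZ1 p z₁ ≠ 0) :
    pAWZ1C p a w z₁ c * pZ1 p z₁ = pWZ1 p w z₁ * pAZ1C p a z₁ c := by
  have h := hCI w a c z₁
  field_simp at h
  linear_combination h

theorem CI_W_AC_Z1.pWZ1_div_pAWZ1C [Fintype A] [Fintype W] [Fintype C] [Nonempty Y]
    [Nonempty W] (hpos : ∀ o, 0 < p o) (hCI : CI_W_AC_Z1 p) (a : A) (w : W) (z₁ : Z₁) (c : C) :
    pWZ1 p w z₁ / pAWZ1C p a w z₁ c = pZ1 p z₁ / pAZ1C p a z₁ c := by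
  have : Nonempty A := ⟨a⟩
  have : Nonempty C := ⟨c⟩
  rw [div_eq_div_iff (pAWZ1C_pos hpos a w z₁ c).ne' (pAZ1C_pos hpos a z₁ c).ne']
  linear_combination -hCI.pAWZ1C_mul_pZ1 a w z₁ c (pZ1_pos hpos z₁).ne'

theorem pZ1_mul_EY [Fintype A] [Fintype W] [Fintype C] [Nonempty Y] [Nonempty W]
    (hpos : ∀ o, 0 < p o) (hCI : CI_W_AC_Z1 p) (a : A) (z₁ : Z₁) (c : C) :
    pZ1 p z₁ * EY p a z₁ c = ∑ w : W, pWZ1 p w z₁ * EYW p a w z₁ c := by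
  calc pZ1 p z₁ * EY p a z₁ c
      = pZ1 p z₁ / pAZ1C p a z₁ c * ∑ w : W, ∑ y : Y, (y : ℝ) * p (y, a, w, z₁, c) := by
        have hswap : ∑ y : Y, (y : ℝ) * ∑ w : W, p (y, a, w, z₁, c) =
            ∑ w : W, ∑ y : Y, (y : ℝ) * p (y, a, w, z₁, c) := by
          simp only [mul_sum]
          exact sum_comm
        rw [EY_eq_sum_div, hswap]
        ring
    _ = ∑ w : W, pWZ1 p w z₁ / pAWZ1C p a w z₁ c * ∑ y : Y, (y : ℝ) * p (y, a, w, z₁, c) := by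
        simp only [hCI.pWZ1_div_pAWZ1C hpos, mul_sum]
    _ = ∑ w : W, pWZ1 p w z₁ * EYW p a w z₁ c := by
        refine sum_congr rfl fun w _ => ?_
        rw [EYW_eq_sum_div]
        ring

end

section

variable {Y : Finset ℝ} {A W Z₁ C : Type}
variable [Fintype A] [Fintype W] [Fintype Z₁] [Fintype C]

/-- Sufficiency direction of Lemma 2.1: under `W ⊥ (A, C) | Z₁`,
augmenting the mediator component `Z₁` by the remaining mediating
parents `W` of the outcome leaves the adjusted functional unchanged. -/
theorem adjusted_functional_augment_mediators
    (p : Y × A × W × Z₁ × C → ℝ)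
    (hpos : ∀ o, 0 < p o) (hsum : ∑ o, p o = 1) (a : A)
    (hCI : CI_W_AC_Z1 p) :
    ∑ z₁ : Z₁, pZ1 p z₁ * ∑ c : C, pC p c * EY p a z₁ c =
      ∑ w : W, ∑ z₁ : Z₁, pWZ1 p w z₁ * ∑ c : C, pC p c * EYW p a w z₁ c := by
  obtain ⟨⟨y, -, w, -, -⟩⟩ : Nonempty (Y × A × W × Z₁ × C) :=
    univ_nonempty_iff.mp (nonempty_of_sum_ne_zero (by rw [hsum]; exact one_ne_zero))
  have : Nonempty Y := ⟨y⟩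
  have : Nonempty W := ⟨w⟩
  calc ∑ z₁ : Z₁, pZ1 p z₁ * ∑ c : C, pC p c * EY p a z₁ c
      = ∑ z₁ : Z₁, ∑ c : C, pC p c * (pZ1 p z₁ * EY p a z₁ c) := by
        simp only [mul_sum, mul_left_comm]
    _ = ∑ z₁ : Z₁, ∑ c : C, ∑ w : W, pC p c * (pWZ1 p w z₁ * EYW p a w z₁ c) := by
        simp only [pZ1_mul_EY hpos hCI, mul_sum]
    _ = ∑ w : W, ∑ z₁ : Z₁, ∑ c : C, pC p c * (pWZ1 p w z₁ * EYW p a w z₁ c) :=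
        (sum_congr rfl fun _ _ => sum_comm).trans sum_comm
    _ = ∑ w : W, ∑ z₁ : Z₁, pWZ1 p w z₁ * ∑ c : C, pC p c * EYW p a w z₁ c := by
        simp only [mul_sum, mul_left_comm]

end
end

section
/- Let 𝒴 ⊂ ℝ be a finite set, let 𝒜, 𝒲, 𝒵₁, 𝒞 be finite types, let p be a strictly positive probability mass function on 𝒴 × 𝒜 × 𝒲 × 𝒵₁ × 𝒞, and fix a ∈ 𝒜. Then ∑_{(w,z₁)} p(w,z₁) ∑_c p(c) E[Y | A=a, W=w, Z₁=z₁, C=c] − ∑_{z₁} p(z₁) ∑_c p(c) E[Y | A=a, Z₁=z₁, C=c] = ∑_{z₁} p(z₁) ∑_c p(c) ∑_w E[Y | A=a, W=w, Z₁=z₁, C=c] · ( p(w | z₁) − p(w | A=a, Z₁=z₁, C=c) ), where E[Y | ·] := ∑_y y · p(y | ·). -/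
/-!
Expand the right-hand side. Since `p(z₁) · p(w | z₁) = p(w, z₁)`, its first half is the
`(W, Z₁)`-adjusted functional; since averaging `E[Y | a, w, z₁, c]` against `p(w | a, z₁, c)`
gives `E[Y | a, z₁, c]` (tower property), its second half is the `Z₁`-adjusted one. For
nonnegative `p` both cancellations survive zero denominators (where `x / 0 = 0`), because a
vanishing marginal forces every numerator below it to vanish.
-/

open Finset

noncomputable section

variable {Y : Finset ℝ} {A W Z₁ C : Type}
variable [Fintype A] [Fintype W] [Fintype Z₁] [Fintype C]

omit [Fintype Z₁] in
lemma sum_pWZ1 (p : Y × A × W × Z₁ × C → ℝ) (z₁ : Z₁) : ∑ w, pWZ1 p w z₁ = pZ1 p z₁ := by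
  unfold pWZ1 pZ1
  rw [sum_comm]
  exact sum_congr rfl fun y _ => sum_comm

omit [Fintype Z₁] in
lemma pZ1_mul_div_pZ1 {p : Y × A × W × Z₁ × C → ℝ} (hp : ∀ o, 0 ≤ p o) (w : W) (z₁ : Z₁) :
    pZ1 p z₁ * (pWZ1 p w z₁ / pZ1 p z₁) = pWZ1 p w z₁ := by
  refine mul_div_cancel_of_imp' fun hz => ?_
  have hnonneg : ∀ w', 0 ≤ pWZ1 p w' z₁ := fun w' =>
    sum_nonneg fun _ _ => sum_nonneg fun _ _ => sum_nonneg fun _ _ => hp _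
  rw [← sum_pWZ1] at hz
  exact (sum_eq_zero_iff_of_nonneg fun w' _ => hnonneg w').1 hz w (mem_univ w)

omit [Fintype A] [Fintype W] [Fintype Z₁] [Fintype C] in
lemma EYW_mul_pAWZ1C {p : Y × A × W × Z₁ × C → ℝ} (hp : ∀ o, 0 ≤ p o)
    (a : A) (w : W) (z₁ : Z₁) (c : C) :
    EYW p a w z₁ c * pAWZ1C p a w z₁ c = ∑ y : Y, (y : ℝ) * p (y, a, w, z₁, c) := by
  unfold EYW
  rw [sum_mul]
  refine sum_congr rfl fun y _ => ?_
  rw [mul_assoc, div_mul_cancel_of_imp fun h => ?_]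
  exact (sum_eq_zero_iff_of_nonneg fun y' _ => hp _).1 h y (mem_univ y)

omit [Fintype A] [Fintype Z₁] [Fintype C] in
lemma EY_eq_sum_EYW_mul {p : Y × A × W × Z₁ × C → ℝ} (hp : ∀ o, 0 ≤ p o)
    (a : A) (z₁ : Z₁) (c : C) :
    EY p a z₁ c = ∑ w : W, EYW p a w z₁ c * (pAWZ1C p a w z₁ c / pAZ1C p a z₁ c) := by
  simp_rw [← mul_div_assoc, EYW_mul_pAWZ1C hp, ← sum_div, EY, mul_div_assoc', ← sum_div, mul_sum]
  rw [sum_comm]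

theorem adjusted_functional_bias_identity_general
    (p : Y × A × W × Z₁ × C → ℝ)
    (hpos : ∀ o, 0 < p o) (a : A) :
    (∑ w : W, ∑ z₁ : Z₁, pWZ1 p w z₁ * ∑ c : C, pC p c * EYW p a w z₁ c)
      - (∑ z₁ : Z₁, pZ1 p z₁ * ∑ c : C, pC p c * EY p a z₁ c) =
    ∑ z₁ : Z₁, pZ1 p z₁ * ∑ c : C, pC p c *
      ∑ w : W, EYW p a w z₁ c *
        (pWZ1 p w z₁ / pZ1 p z₁ - pAWZ1C p a w z₁ c / pAZ1C p a z₁ c) := by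
  have hp : ∀ o, 0 ≤ p o := fun o => (hpos o).le
  simp only [mul_sub, sum_sub_distrib, ← EY_eq_sum_EYW_mul hp]
  congr 1
  rw [sum_comm]
  refine sum_congr rfl fun z₁ _ => ?_
  simp only [mul_sum]
  rw [sum_comm]
  refine sum_congr rfl fun c _ => sum_congr rfl fun w _ => ?_
  linear_combination -(pC p c * EYW p a w z₁ c) * pZ1_mul_div_pZ1 hp w z₁

/-- Bias identity in the necessity direction of Lemma 2.1: the discrepancy
between the adjusted functional computed with the full mediating parents
`(W, Z₁)` and with `Z₁` alone is driven by `p(w | z₁) − p(w | a, z₁, c)`. -/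
theorem adjusted_functional_bias_identity
    (p : Y × A × W × Z₁ × C → ℝ)
    (hpos : ∀ o, 0 < p o) (hsum : ∑ o, p o = 1) (a : A) :
    (∑ w : W, ∑ z₁ : Z₁, pWZ1 p w z₁ * ∑ c : C, pC p c * EYW p a w z₁ c)
      - (∑ z₁ : Z₁, pZ1 p z₁ * ∑ c : C, pC p c * EY p a z₁ c) =
    ∑ z₁ : Z₁, pZ1 p z₁ * ∑ c : C, pC p c *
      ∑ w : W, EYW p a w z₁ c *
        (pWZ1 p w z₁ / pZ1 p z₁ - pAWZ1C p a w z₁ c / pAZ1C p a z₁ c) :=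
  adjusted_functional_bias_identity_general p hpos a

end
end

section
/- Let 𝒴 ⊂ ℝ be a finite set, let 𝒜, 𝒢₁, 𝒢₂, ℬ₂ be finite types, let p be a strictly positive probability mass function on 𝒴 × 𝒜 × 𝒢₁ × 𝒢₂ × ℬ₂, and fix a ∈ 𝒜. If G₂ ⊥ (A, G₁) | B₂ under p, then the two adjusted functionals coincide: ∑_{g₁} p(g₁) ∑_{(g₂,b₂)} p(g₂,b₂) · m₂(g₁,g₂,b₂) = ∑_{g₁} p(g₁) ∑_{b₂} p(b₂) · m₁(g₁,b₂), where m₂(g₁,g₂,b₂) := ∑_y y·p(y | A=a, g₁, g₂, b₂) and m₁(g₁,b₂) := ∑_y y·p(y | A=a, g₁, b₂). -/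
/-!
Conditional independence `G₂ ⊥ (A, G₁) | B₂` says `p(a,g₁,g₂,b₂) p(b₂) = p(g₂,b₂) p(a,g₁,b₂)`,
so the weight `p(g₂,b₂) / p(a,g₁,g₂,b₂)` that turns `m₂` back into a sum over `y` does not depend
on `g₂`: it is `p(b₂) / p(a,g₁,b₂)`. Hence for fixed `g₁, b₂` the sum over `g₂` of `p(g₂,b₂) m₂`
collapses to `p(b₂) / p(a,g₁,b₂) · ∑_y y p(y,a,g₁,b₂) = p(b₂) m₁`.
-/

open Finset

noncomputable section

variable {Y : Finset ℝ} {A G₁ G₂ B₂ : Type}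
variable [Fintype A] [Fintype G₁] [Fintype G₂] [Fintype B₂] [DecidableEq A]

/-- Marginal `p(g₁)`. -/
def pG1 (p : Y × A × G₁ × G₂ × B₂ → ℝ) (g₁ : G₁) : ℝ :=
  ∑ y : Y, ∑ a : A, ∑ g₂ : G₂, ∑ b₂ : B₂, p (y, a, g₁, g₂, b₂)

/-- Marginal `p(g₂)`. -/
def pG2 (p : Y × A × G₁ × G₂ × B₂ → ℝ) (g₂ : G₂) : ℝ :=
  ∑ y : Y, ∑ a : A, ∑ g₁ : G₁, ∑ b₂ : B₂, p (y, a, g₁, g₂, b₂)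

/-- Marginal `p(b₂)`. -/
def pB2 (p : Y × A × G₁ × G₂ × B₂ → ℝ) (b₂ : B₂) : ℝ :=
  ∑ y : Y, ∑ a : A, ∑ g₁ : G₁, ∑ g₂ : G₂, p (y, a, g₁, g₂, b₂)

/-- Marginal `p(g₂, b₂)`. -/
def pG2B2 (p : Y × A × G₁ × G₂ × B₂ → ℝ) (g₂ : G₂) (b₂ : B₂) : ℝ :=
  ∑ y : Y, ∑ a : A, ∑ g₁ : G₁, p (y, a, g₁, g₂, b₂)

/-- Marginal `p(a, g₁, b₂)`. -/
def pAG1B2 (p : Y × A × G₁ × G₂ × B₂ → ℝ) (a : A) (g₁ : G₁) (b₂ : B₂) : ℝ :=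
  ∑ y : Y, ∑ g₂ : G₂, p (y, a, g₁, g₂, b₂)

/-- Marginal `p(a, g₁, g₂, b₂)`. -/
def pAG1G2B2 (p : Y × A × G₁ × G₂ × B₂ → ℝ) (a : A) (g₁ : G₁) (g₂ : G₂) (b₂ : B₂) : ℝ :=
  ∑ y : Y, p (y, a, g₁, g₂, b₂)

/-- Marginal `p(a, g₁, g₂)`. -/
def pAG1G2 (p : Y × A × G₁ × G₂ × B₂ → ℝ) (a : A) (g₁ : G₁) (g₂ : G₂) : ℝ :=
  ∑ y : Y, ∑ b₂ : B₂, p (y, a, g₁, g₂, b₂)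

/-- Outcome regression `m₁(g₁,b₂) = ∑_y y·p(y | a, g₁, b₂)` for the
adjustment set `(G₁, B₂)`. -/
def m1 (p : Y × A × G₁ × G₂ × B₂ → ℝ) (a : A) (g₁ : G₁) (b₂ : B₂) : ℝ :=
  ∑ y : Y, (y : ℝ) * ((∑ g₂ : G₂, p (y, a, g₁, g₂, b₂)) / pAG1B2 p a g₁ b₂)

/-- Outcome regression `m₂(g₁,g₂,b₂) = ∑_y y·p(y | a, g₁, g₂, b₂)` for the
adjustment set `(G₁, (G₂, B₂))`. -/
def m2 (p : Y × A × G₁ × G₂ × B₂ → ℝ) (a : A) (g₁ : G₁) (g₂ : G₂) (b₂ : B₂) : ℝ :=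
  ∑ y : Y, (y : ℝ) * (p (y, a, g₁, g₂, b₂) / pAG1G2B2 p a g₁ g₂ b₂)

/-- Outcome regression `m₃(g₁,g₂) = ∑_y y·p(y | a, g₁, g₂)` for the
adjustment set `(G₁, G₂)`. -/
def m3 (p : Y × A × G₁ × G₂ × B₂ → ℝ) (a : A) (g₁ : G₁) (g₂ : G₂) : ℝ :=
  ∑ y : Y, (y : ℝ) * ((∑ b₂ : B₂, p (y, a, g₁, g₂, b₂)) / pAG1G2 p a g₁ g₂)

/-- Target parameter for the adjustment set `(G₁, B₂)`. -/
def T1 (p : Y × A × G₁ × G₂ × B₂ → ℝ) (a : A) : ℝ :=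
  ∑ g₁ : G₁, pG1 p g₁ * ∑ b₂ : B₂, pB2 p b₂ * m1 p a g₁ b₂

/-- Target parameter for the adjustment set `(G₁, (G₂, B₂))`. -/
def T2 (p : Y × A × G₁ × G₂ × B₂ → ℝ) (a : A) : ℝ :=
  ∑ g₁ : G₁, pG1 p g₁ * ∑ g₂ : G₂, ∑ b₂ : B₂, pG2B2 p g₂ b₂ * m2 p a g₁ g₂ b₂

/-- Target parameter for the adjustment set `(G₁, G₂)`. -/
def T3 (p : Y × A × G₁ × G₂ × B₂ → ℝ) (a : A) : ℝ :=
  ∑ g₁ : G₁, pG1 p g₁ * ∑ g₂ : G₂, pG2 p g₂ * m3 p a g₁ g₂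

/-- Influence function `ψ_a^{G₁,B₂}` for the adjustment set `(G₁, B₂)`. -/
def psi1 (p : Y × A × G₁ × G₂ × B₂ → ℝ) (a : A)
    (y : Y) (a' : A) (g₁ : G₁) (b₂ : B₂) : ℝ :=
  (if a' = a then (1 : ℝ) else 0) * (pG1 p g₁ * pB2 p b₂ / pAG1B2 p a g₁ b₂) *
      ((y : ℝ) - m1 p a g₁ b₂)
    + (∑ b₂' : B₂, pB2 p b₂' * m1 p a g₁ b₂')
    + (∑ g₁' : G₁, pG1 p g₁' * m1 p a g₁' b₂)
    - 2 * T1 p a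

/-- Influence function `ψ_a^{G₁,(G₂,B₂)}` for the adjustment set `(G₁, (G₂, B₂))`. -/
def psi2 (p : Y × A × G₁ × G₂ × B₂ → ℝ) (a : A)
    (y : Y) (a' : A) (g₁ : G₁) (g₂ : G₂) (b₂ : B₂) : ℝ :=
  (if a' = a then (1 : ℝ) else 0) *
      (pG1 p g₁ * pG2B2 p g₂ b₂ / pAG1G2B2 p a g₁ g₂ b₂) *
      ((y : ℝ) - m2 p a g₁ g₂ b₂)
    + (∑ g₂' : G₂, ∑ b₂' : B₂, pG2B2 p g₂' b₂' * m2 p a g₁ g₂' b₂')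
    + (∑ g₁' : G₁, pG1 p g₁' * m2 p a g₁' g₂ b₂)
    - 2 * T2 p a

/-- Influence function `ψ_a^{G₁,G₂}` for the adjustment set `(G₁, G₂)`. -/
def psi3 (p : Y × A × G₁ × G₂ × B₂ → ℝ) (a : A)
    (y : Y) (a' : A) (g₁ : G₁) (g₂ : G₂) : ℝ :=
  (if a' = a then (1 : ℝ) else 0) * (pG1 p g₁ * pG2 p g₂ / pAG1G2 p a g₁ g₂) *
      ((y : ℝ) - m3 p a g₁ g₂)
    + (∑ g₂' : G₂, pG2 p g₂' * m3 p a g₁ g₂')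
    + (∑ g₁' : G₁, pG1 p g₁' * m3 p a g₁' g₂)
    - 2 * T3 p a

/-- Conditional independence `G₂ ⊥ (A, G₁) | B₂` under `p`. -/
def CI_G2_AG1_B2 (p : Y × A × G₁ × G₂ × B₂ → ℝ) : Prop :=
  ∀ (g₂ : G₂) (a : A) (g₁ : G₁) (b₂ : B₂),
    (∑ y : Y, p (y, a, g₁, g₂, b₂)) / pB2 p b₂ =
      (pG2B2 p g₂ b₂ / pB2 p b₂) * (pAG1B2 p a g₁ b₂ / pB2 p b₂)

/-- Conditional independence `Y ⊥ B₂ | (A, G₁, G₂)` under `p`. -/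
def CI_Y_B2_AG1G2 (p : Y × A × G₁ × G₂ × B₂ → ℝ) : Prop :=
  ∀ (y : Y) (a : A) (g₁ : G₁) (g₂ : G₂) (b₂ : B₂),
    p (y, a, g₁, g₂, b₂) / pAG1G2 p a g₁ g₂ =
      ((∑ b₂' : B₂, p (y, a, g₁, g₂, b₂')) / pAG1G2 p a g₁ g₂) *
        (pAG1G2B2 p a g₁ g₂ b₂ / pAG1G2 p a g₁ g₂)

/-- Variance of a real function of the observation under `p`. -/
def VarP (p : Y × A × G₁ × G₂ × B₂ → ℝ) (f : Y × A × G₁ × G₂ × B₂ → ℝ) : ℝ :=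
  (∑ o : Y × A × G₁ × G₂ × B₂, p o * f o ^ 2) -
    (∑ o : Y × A × G₁ × G₂ × B₂, p o * f o) ^ 2

end

section

variable {Y : Finset ℝ} {A G₁ G₂ B₂ : Type} {p : Y × A × G₁ × G₂ × B₂ → ℝ}

theorem m1_eq_div [Fintype G₂] (p : Y × A × G₁ × G₂ × B₂ → ℝ) (a : A) (g₁ : G₁) (b₂ : B₂) :
    m1 p a g₁ b₂ = (∑ y : Y, (y : ℝ) * ∑ g₂ : G₂, p (y, a, g₁, g₂, b₂)) / pAG1B2 p a g₁ b₂ := by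
  rw [m1, sum_div]
  simp only [mul_div_assoc]

theorem m2_eq_div (p : Y × A × G₁ × G₂ × B₂ → ℝ) (a : A) (g₁ : G₁) (g₂ : G₂) (b₂ : B₂) :
    m2 p a g₁ g₂ b₂ = (∑ y : Y, (y : ℝ) * p (y, a, g₁, g₂, b₂)) / pAG1G2B2 p a g₁ g₂ b₂ := by
  rw [m2, sum_div]
  simp only [mul_div_assoc]

theorem pAG1G2B2_pos [Nonempty Y] (hpos : ∀ o, 0 < p o) (a : A) (g₁ : G₁) (g₂ : G₂) (b₂ : B₂) :
    0 < pAG1G2B2 p a g₁ g₂ b₂ :=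
  sum_pos (fun _ _ => hpos _) univ_nonempty

theorem pAG1B2_pos [Fintype G₂] [Nonempty Y] [Nonempty G₂] (hpos : ∀ o, 0 < p o)
    (a : A) (g₁ : G₁) (b₂ : B₂) : 0 < pAG1B2 p a g₁ b₂ :=
  sum_pos (fun _ _ => sum_pos (fun _ _ => hpos _) univ_nonempty) univ_nonempty

section

variable [Fintype A] [Fintype G₁] [Fintype G₂]

theorem pB2_pos [Nonempty Y] [Nonempty A] [Nonempty G₁] [Nonempty G₂] (hpos : ∀ o, 0 < p o)
    (b₂ : B₂) : 0 < pB2 p b₂ :=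
  sum_pos (fun _ _ => sum_pos (fun _ _ => sum_pos (fun _ _ => sum_pos (fun _ _ => hpos _)
    univ_nonempty) univ_nonempty) univ_nonempty) univ_nonempty

theorem CI_G2_AG1_B2.mul_pB2 (hCI : CI_G2_AG1_B2 p) {b₂ : B₂} (hb : pB2 p b₂ ≠ 0)
    (a : A) (g₁ : G₁) (g₂ : G₂) :
    pAG1G2B2 p a g₁ g₂ b₂ * pB2 p b₂ = pG2B2 p g₂ b₂ * pAG1B2 p a g₁ b₂ := by
  have h : pAG1G2B2 p a g₁ g₂ b₂ / pB2 p b₂ =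
      pG2B2 p g₂ b₂ * pAG1B2 p a g₁ b₂ / (pB2 p b₂ * pB2 p b₂) := by
    rw [mul_div_mul_comm]
    exact hCI g₂ a g₁ b₂
  rw [div_eq_div_iff hb (mul_ne_zero hb hb), ← mul_assoc] at h
  exact mul_right_cancel₀ hb h

theorem CI_G2_AG1_B2.pG2B2_div_pAG1G2B2 [Nonempty Y] (hpos : ∀ o, 0 < p o)
    (hCI : CI_G2_AG1_B2 p) (a : A) (g₁ : G₁) (g₂ : G₂) (b₂ : B₂) :
    pG2B2 p g₂ b₂ / pAG1G2B2 p a g₁ g₂ b₂ = pB2 p b₂ / pAG1B2 p a g₁ b₂ := by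
  have : Nonempty A := ⟨a⟩
  have : Nonempty G₁ := ⟨g₁⟩
  have : Nonempty G₂ := ⟨g₂⟩
  rw [div_eq_div_iff (pAG1G2B2_pos hpos a g₁ g₂ b₂).ne' (pAG1B2_pos hpos a g₁ b₂).ne',
    ← hCI.mul_pB2 (pB2_pos hpos b₂).ne', mul_comm]

theorem CI_G2_AG1_B2.sum_pG2B2_mul_m2 [Nonempty Y] (hpos : ∀ o, 0 < p o)
    (hCI : CI_G2_AG1_B2 p) (a : A) (g₁ : G₁) (b₂ : B₂) :
    ∑ g₂ : G₂, pG2B2 p g₂ b₂ * m2 p a g₁ g₂ b₂ = pB2 p b₂ * m1 p a g₁ b₂ := calc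
  _ = ∑ g₂ : G₂, pB2 p b₂ / pAG1B2 p a g₁ b₂ * ∑ y : Y, (y : ℝ) * p (y, a, g₁, g₂, b₂) := by
    refine sum_congr rfl fun g₂ _ => ?_
    rw [m2_eq_div, mul_div_assoc', mul_div_right_comm, hCI.pG2B2_div_pAG1G2B2 hpos]
  _ = pB2 p b₂ / pAG1B2 p a g₁ b₂ * ∑ y : Y, (y : ℝ) * ∑ g₂ : G₂, p (y, a, g₁, g₂, b₂) := by
    rw [← mul_sum, sum_comm]
    simp only [mul_sum]
  _ = pB2 p b₂ * m1 p a g₁ b₂ := by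
    rw [m1_eq_div, mul_div_assoc', mul_div_right_comm]

end

variable [Fintype A] [Fintype G₁] [Fintype G₂] [Fintype B₂] [DecidableEq A]

/-- Lemma 4.1 (uniqueness across valid adjustment sets): under
`G₂ ⊥ (A, G₁) | B₂`, the adjusted functionals for `(G₁, (G₂,B₂))` and
`(G₁, B₂)` coincide. -/
theorem adjusted_functionals_coincide
    (p : Y × A × G₁ × G₂ × B₂ → ℝ)
    (hpos : ∀ o, 0 < p o) (hsum : ∑ o, p o = 1) (a : A)
    (hCI : CI_G2_AG1_B2 p) :
    ∑ g₁ : G₁, pG1 p g₁ *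
        ∑ g₂ : G₂, ∑ b₂ : B₂, pG2B2 p g₂ b₂ * m2 p a g₁ g₂ b₂ =
      ∑ g₁ : G₁, pG1 p g₁ * ∑ b₂ : B₂, pB2 p b₂ * m1 p a g₁ b₂ := by
  obtain ⟨⟨y, -⟩⟩ : Nonempty (Y × A × G₁ × G₂ × B₂) :=
    univ_nonempty_iff.mp (nonempty_of_sum_ne_zero (hsum ▸ one_ne_zero))
  have : Nonempty Y := ⟨y⟩
  refine sum_congr rfl fun g₁ _ => ?_
  rw [sum_comm]
  simp only [hCI.sum_pG2B2_mul_m2 hpos]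

end
end

section
/- Let 𝒴 ⊂ ℝ be a finite set, let 𝒜, 𝒢₁, 𝒢₂, ℬ₂ be finite types, let p be a strictly positive probability mass function on 𝒴 × 𝒜 × 𝒢₁ × 𝒢₂ × ℬ₂, and fix a ∈ 𝒜. If Y ⊥ B₂ | (A, G₁, G₂) under p, then for all (y, g₁, g₂): ∑_{b₂} ( p(g₁)·p(g₂,b₂) / p(a,g₁,g₂,b₂) ) · p(b₂ | A=a, Y=y, G₁=g₁, G₂=g₂) = p(g₁)·p(g₂) / p(a,g₁,g₂). -/
open Finset

noncomputable section

variable {Y : Finset ℝ} {A G₁ G₂ B₂ : Type}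
variable [Fintype A] [Fintype G₁] [Fintype G₂] [Fintype B₂] [DecidableEq A]

theorem Finset.sum_div_mul_div_sum_of_div_sum_eq {β : Type*} [Fintype β] (w q r : β → ℝ)
    (hr : ∀ b, r b ≠ 0) (hqr : ∀ b, q b / ∑ b', q b' = r b / ∑ b', r b') :
    ∑ b, w b / r b * (q b / ∑ b', q b') = (∑ b, w b) / ∑ b, r b := by
  simp only [hqr, div_mul_div_cancel₀ (hr _), ← Finset.sum_div]

theorem weight_collapse_general
    (p : Y × A × G₁ × G₂ × B₂ → ℝ)
    (hpos : ∀ o, 0 < p o) (a : A)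
    (hCI : CI_Y_B2_AG1G2 p) :
    ∀ (y : Y) (g₁ : G₁) (g₂ : G₂),
      ∑ b₂ : B₂,
        (pG1 p g₁ * pG2B2 p g₂ b₂ / pAG1G2B2 p a g₁ g₂ b₂) *
          (p (y, a, g₁, g₂, b₂) / (∑ b₂' : B₂, p (y, a, g₁, g₂, b₂'))) =
        pG1 p g₁ * pG2 p g₂ / pAG1G2 p a g₁ g₂ := by
  intro y g₁ g₂
  have hr : ∀ b₂, 0 < pAG1G2B2 p a g₁ g₂ b₂ := fun _ =>
    Finset.sum_pos (fun _ _ => hpos _) ⟨y, Finset.mem_univ _⟩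
  have hsum_r : ∑ b₂, pAG1G2B2 p a g₁ g₂ b₂ = pAG1G2 p a g₁ g₂ := Finset.sum_comm
  have hsum_w : ∑ b₂, pG2B2 p g₂ b₂ = pG2 p g₂ := by
    simp only [pG2B2, pG2, Finset.sum_comm (γ := B₂)]
  -- `Y ⊥ B₂ | (A, G₁, G₂)` says exactly that `p(b₂ | a, y, g₁, g₂) = p(b₂ | a, g₁, g₂)`.
  have hcond : ∀ b₂, p (y, a, g₁, g₂, b₂) / ∑ b₂', p (y, a, g₁, g₂, b₂') =
      pAG1G2B2 p a g₁ g₂ b₂ / ∑ b₂', pAG1G2B2 p a g₁ g₂ b₂' := fun b₂ => by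
    have hR : 0 < ∑ b₂', pAG1G2B2 p a g₁ g₂ b₂' :=
      Finset.sum_pos (fun _ _ => hr _) ⟨b₂, Finset.mem_univ _⟩
    have hS : 0 < ∑ b₂', p (y, a, g₁, g₂, b₂') :=
      Finset.sum_pos (fun _ _ => hpos _) ⟨b₂, Finset.mem_univ _⟩
    have h := hCI y a g₁ g₂ b₂
    rw [hsum_r] at hR ⊢
    field_simp at h ⊢
    linear_combination h
  rw [Finset.sum_div_mul_div_sum_of_div_sum_eq _ _ _ (fun b₂ => (hr b₂).ne') hcond,
    ← Finset.mul_sum, hsum_w, hsum_r]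

/-- Key density-ratio computation in the proof of Lemma 4.2 (deletion of
overadjustment backdoor variables): under `Y ⊥ B₂ | (A, G₁, G₂)`, the
conditional expectation of the inverse-probability weight for the larger
adjustment set collapses to the weight for the smaller set. -/
theorem weight_collapse
    (p : Y × A × G₁ × G₂ × B₂ → ℝ)
    (hpos : ∀ o, 0 < p o) (hsum : ∑ o, p o = 1) (a : A)
    (hCI : CI_Y_B2_AG1G2 p) :
    ∀ (y : Y) (g₁ : G₁) (g₂ : G₂),
      ∑ b₂ : B₂,
        (pG1 p g₁ * pG2B2 p g₂ b₂ / pAG1G2B2 p a g₁ g₂ b₂) *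
          (p (y, a, g₁, g₂, b₂) / (∑ b₂' : B₂, p (y, a, g₁, g₂, b₂'))) =
        pG1 p g₁ * pG2 p g₂ / pAG1G2 p a g₁ g₂ :=
  weight_collapse_general p hpos a hCI

end
end
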